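/- In the limit μ → 0 with μ·N_a → ε fixed (high-temperature limit), the Einstein-lattice fraction (e^{-μN_a}/2)[(N_a²+3N_a+2)(1-e^{-μ})² + (2N_a+3)e^{-μ}(1-e^{-μ}) + 2e^{-2μ}] converges to e^{-ε}(ε²/2 + ε + 1), the classical 3D result. -/

import Mathlib

/-!
The ceiling makes `μ N_a` converge to `ε`, and `(1 - e^{-μ}) / μ → 1` then gives
`N_a (1 - e^{-μ}) → ε`. Regrouped in `b = N_a (1 - e^{-μ})`, `d = 1 - e^{-μ}` and `e^{-μ}`,
the bracket is `b² + 3bd + 2d² + (2b + 3d) e^{-μ} + 2 e^{-2μ}`, which tends to `ε² + 2ε + 2`,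
while the prefactor tends to `e^{-ε} / 2`.
-/

open Real Filter

open scoped Topology

theorem tendsto_mul_ceil_div_sub {ι : Type*} {l : Filter ι} {μ : ι → ℝ} (hμpos : ∀ i, 0 < μ i)
    (hμ : Tendsto μ l (𝓝 0)) (ε c : ℝ) :
    Tendsto (fun i => μ i * ⌈ε / μ i - c⌉) l (𝓝 ε) := by
  have hbound (i : ι) : ε - c * μ i ≤ μ i * ⌈ε / μ i - c⌉ ∧
      μ i * ⌈ε / μ i - c⌉ ≤ ε - c * μ i + μ i := by
    have hμi := hμpos i
    have hlo : ε - c * μ i = μ i * (ε / μ i - c) := by field_simp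
    constructor
    · rw [hlo]
      exact mul_le_mul_of_nonneg_left (Int.le_ceil _) hμi.le
    · rw [hlo, ← mul_add_one]
      exact mul_le_mul_of_nonneg_left (Int.ceil_lt_add_one _).le hμi.le
  have hlim : Tendsto (fun i => ε - c * μ i) l (𝓝 ε) := by
    simpa using tendsto_const_nhds.sub (hμ.const_mul c)
  exact tendsto_of_tendsto_of_tendsto_of_le_of_le hlim (by simpa using hlim.add hμ)
    (fun i => (hbound i).1) (fun i => (hbound i).2)

theorem tendsto_one_sub_exp_neg_div_self :
    Tendsto (fun x : ℝ => (1 - exp (-x)) / x) (𝓝[≠] 0) (𝓝 1) := by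
  have hderiv : HasDerivAt (fun x : ℝ => 1 - exp (-x)) 1 0 := by
    simpa using ((hasDerivAt_neg 0).exp).const_sub 1
  refine hderiv.tendsto_slope_zero.congr fun x => ?_
  simp [div_eq_inv_mul]

noncomputable def einsteinFraction (x N : ℝ) : ℝ :=
  exp (-x * N) / 2 *
    ((N ^ 2 + 3 * N + 2) * (1 - exp (-x)) ^ 2 +
      (2 * N + 3) * exp (-x) * (1 - exp (-x)) + 2 * exp (-2 * x))

theorem einsteinFraction_eq (x N : ℝ) :
    einsteinFraction x N =
      exp (-(x * N)) / 2 *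
        ((N * (1 - exp (-x))) ^ 2 + 3 * (N * (1 - exp (-x))) * (1 - exp (-x)) +
          2 * (1 - exp (-x)) ^ 2 + (2 * (N * (1 - exp (-x))) + 3 * (1 - exp (-x))) * exp (-x) +
          2 * exp (-x) ^ 2) := by
  rw [einsteinFraction, show -2 * x = -x + -x by ring, exp_add]
  ring_nf

theorem tendsto_einsteinFraction {ι : Type*} {l : Filter ι} {μ N : ι → ℝ} {ε : ℝ}
    (hμ : Tendsto μ l (𝓝[≠] 0)) (hN : Tendsto (fun i => μ i * N i) l (𝓝 ε)) :
    Tendsto (fun i => einsteinFraction (μ i) (N i)) l (𝓝 (exp (-ε) * (ε ^ 2 / 2 + ε + 1))) := by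
  have hexp : Tendsto (fun i => exp (-μ i)) l (𝓝 1) := by
    simpa [Function.comp_def] using
      (continuous_exp.tendsto _).comp (tendsto_nhds_of_tendsto_nhdsWithin hμ).neg
  have hgap : Tendsto (fun i => 1 - exp (-μ i)) l (𝓝 0) := by
    simpa using (tendsto_const_nhds (x := (1 : ℝ))).sub hexp
  have hscaled : Tendsto (fun i => N i * (1 - exp (-μ i))) l (𝓝 ε) := by
    refine (mul_one ε ▸ hN.mul (tendsto_one_sub_exp_neg_div_self.comp hμ)).congr' ?_
    filter_upwards [hμ self_mem_nhdsWithin] with i hi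
    simp only [Function.comp_apply]
    field_simp [show μ i ≠ 0 from hi]
  have hprefactor : Tendsto (fun i => exp (-(μ i * N i)) / 2) l (𝓝 (exp (-ε) / 2)) :=
    ((continuous_exp.tendsto _).comp hN.neg).div_const 2
  have hbracket := ((((hscaled.pow 2).add ((hscaled.const_mul 3).mul hgap)).add
      ((hgap.pow 2).const_mul 2)).add
      (((hscaled.const_mul 2).add (hgap.const_mul 3)).mul hexp)).add
      ((hexp.pow 2).const_mul 2)
  simp only [einsteinFraction_eq]
  convert hprefactor.mul hbracket using 2
  ring

theorem stmt_15_general (ε : ℝ) (μ : ℕ → ℝ) (hμpos : ∀ n, 0 < μ n)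
    (hμ0 : Filter.Tendsto μ Filter.atTop (nhds 0))
    (Na : ℕ → ℕ) (hNa : ∀ n, (Na n : ℤ) = ⌈ε / μ n - 3 / 2⌉) :
    Filter.Tendsto
      (fun n : ℕ =>
        Real.exp (-(μ n) * (Na n : ℝ)) / 2 *
          (((Na n : ℝ) ^ 2 + 3 * (Na n : ℝ) + 2) * (1 - Real.exp (-(μ n))) ^ 2 +
            (2 * (Na n : ℝ) + 3) * Real.exp (-(μ n)) * (1 - Real.exp (-(μ n))) +
            2 * Real.exp (-2 * μ n)))
      Filter.atTop (nhds (Real.exp (-ε) * (ε ^ 2 / 2 + ε + 1))) := by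
  have hμne : Tendsto μ atTop (𝓝[≠] 0) :=
    tendsto_nhdsWithin_of_tendsto_nhds_of_eventually_within _ hμ0
      (Eventually.of_forall fun n => (hμpos n).ne')
  have hN : Tendsto (fun n => μ n * Na n) atTop (𝓝 ε) :=
    (tendsto_mul_ceil_div_sub hμpos hμ0 ε (3 / 2)).congr fun n => by
      rw [← hNa n, Int.cast_natCast]
  exact tendsto_einsteinFraction hμne hN

/-- High-temperature limit: if `μ_n → 0` (with `μ_n > 0`) and
`N_a(n) = ⌈ε/μ_n - 3/2⌉`, so that `μ_n N_a(n) → ε > 0`, then the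
Einstein-lattice fraction converges to the classical 3D result
`e^{-ε}(ε²/2 + ε + 1)`. -/
theorem stmt_15 (ε : ℝ) (hε : 0 < ε) (μ : ℕ → ℝ) (hμpos : ∀ n, 0 < μ n)
    (hμ0 : Filter.Tendsto μ Filter.atTop (nhds 0))
    (Na : ℕ → ℕ) (hNa : ∀ n, (Na n : ℤ) = ⌈ε / μ n - 3 / 2⌉) :
    Filter.Tendsto
      (fun n : ℕ =>
        Real.exp (-(μ n) * (Na n : ℝ)) / 2 *
          (((Na n : ℝ) ^ 2 + 3 * (Na n : ℝ) + 2) * (1 - Real.exp (-(μ n))) ^ 2 +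
            (2 * (Na n : ℝ) + 3) * Real.exp (-(μ n)) * (1 - Real.exp (-(μ n))) +
            2 * Real.exp (-2 * μ n)))
      Filter.atTop (nhds (Real.exp (-ε) * (ε ^ 2 / 2 + ε + 1))) :=
  stmt_15_general ε μ hμpos hμ0 Na hNa
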